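/- Let V = ℝ^d and let A be a Banach algebra with a strongly continuous isometric action α of V. On the space S(V; A) of A-valued Schwartz functions, define the twisted convolution (f * g)(x) = ∫_V f(y) α_y(g(x−y)) dy. Then f * g ∈ S(V; A) and the operation * is associative and bilinear, making S(V; A) an algebra. -/

import Mathlib

/-!
Write `twConv α f g x = ∫ M y (g (x - y)) dy` with the operator `M y a = f y * α y a`, so that
all derivatives fall on `g`: the derivative of such a convolution is again one, with `g`
replaced by `Dg` and `M y` by post-composition with `M y` on `V →L A`. As `‖M y‖ ≤ ‖f y‖`,
the `n`-th derivative at `x` is bounded by `∫ ‖f y‖ ‖Dⁿg (x - y)‖ dy`, and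
`‖x‖ ^ k ≤ 2 ^ (k - 1) (‖y‖ ^ k + ‖x - y‖ ^ k)` shares the polynomial weight between `f` and `g`.
Associativity is Fubini together with the substitution `z = y + t` and `α (y + t) = α y ∘ α t`.
-/

open MeasureTheory

abbrev Vd (d : ℕ) := EuclideanSpace ℝ (Fin d)

/-- Twisted convolution `(f * g)(x) = ∫ f(y) α_y(g(x−y)) dy` on `A`-valued functions. -/
noncomputable def twConv {d : ℕ} {A : Type*} [NormedRing A] [NormedAlgebra ℂ A]
    [CompleteSpace A] (α : Vd d → (A →ₐ[ℂ] A)) (f g : Vd d → A) : Vd d → A :=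
  fun x => ∫ y : Vd d, f y * α y (g (x - y))

open Filter Topology
open scoped SchwartzMap

theorem Continuous.clm_apply_of_norm_le {𝕜 X E F : Type*} [NontriviallyNormedField 𝕜]
    [TopologicalSpace X] [SeminormedAddCommGroup E] [SeminormedAddCommGroup F]
    [NormedSpace 𝕜 E] [NormedSpace 𝕜 F] {M : X → E →L[𝕜] F} {b : X → ℝ} {u : X → E}
    (hM : ∀ e, Continuous fun x => M x e) (hb : Continuous b) (hMb : ∀ x, ‖M x‖ ≤ b x)
    (hu : Continuous u) : Continuous fun x => M x (u x) := by
  refine continuous_iff_continuousAt.2 fun x₀ => ?_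
  have hsmall : Tendsto (fun x => M x (u x - u x₀)) (𝓝 x₀) (𝓝 0) := by
    refine squeeze_zero_norm (fun x => (M x).le_of_opNorm_le (hMb x) _) ?_
    simpa using (hb.tendsto x₀).mul ((hu.tendsto x₀).sub_const (u x₀)).norm
  simpa [ContinuousAt] using hsmall.add ((hM (u x₀)).tendsto x₀)

theorem SchwartzMap.integrable_norm_mul_norm_iteratedFDeriv_sub {V E W : Type*}
    [NormedAddCommGroup V] [NormedSpace ℝ V] [MeasurableSpace V] [BorelSpace V]
    [SecondCountableTopology V] {μ : Measure V} [μ.HasTemperateGrowth]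
    [NormedAddCommGroup E] [NormedSpace ℝ E] [NormedAddCommGroup W] [NormedSpace ℝ W]
    (f : 𝓢(V, W)) (G : 𝓢(V, E)) (n : ℕ) (x : V) :
    Integrable (fun y => ‖f y‖ * ‖iteratedFDeriv ℝ n G (x - y)‖) μ := by
  refine ((f.integrable (μ := μ)).norm.mul_const (SchwartzMap.seminorm ℝ 0 n G)).mono'
    ?_ (Eventually.of_forall fun y => ?_)
  · exact (f.continuous.norm.mul (((G.smooth ⊤).continuous_iteratedFDeriv
      (mod_cast le_top)).comp (continuous_const.sub continuous_id)).norm).aestronglyMeasurable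
  · rw [Real.norm_of_nonneg (by positivity)]
    gcongr
    exact SchwartzMap.norm_iteratedFDeriv_le_seminorm ℝ G n _

section OperatorConvolution

variable {V E F W : Type*} [NormedAddCommGroup V] [NormedSpace ℝ V]
  [NormedAddCommGroup E] [NormedSpace ℝ E] [NormedAddCommGroup F] [NormedSpace ℝ F]
  [NormedAddCommGroup W] [NormedSpace ℝ W]

/-- Only strong continuity is required, as that is all an action `α` provides; since `V` is
finite-dimensional it passes to `y ↦ (M y).comp`, see `IsSchwartzDominated.compL`. -/
structure IsSchwartzDominated (M : V → E →L[ℝ] F) (f : 𝓢(V, W)) : Prop where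
  continuous_apply : ∀ e, Continuous fun y => M y e
  opNorm_le : ∀ y, ‖M y‖ ≤ ‖f y‖

noncomputable def opConv [MeasurableSpace V] (μ : Measure V) (M : V → E →L[ℝ] F) (G : V → E)
    (x : V) : F :=
  ∫ y, M y (G (x - y)) ∂μ

namespace IsSchwartzDominated

variable {M : V → E →L[ℝ] F} {f : 𝓢(V, W)}

theorem continuous_integrand (hM : IsSchwartzDominated M f) {G : V → E} (hG : Continuous G)
    (x : V) : Continuous fun y => M y (G (x - y)) :=
  Continuous.clm_apply_of_norm_le hM.continuous_apply f.continuous.norm hM.opNorm_le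
    (hG.comp (continuous_const.sub continuous_id))

theorem compL [FiniteDimensional ℝ V] (hM : IsSchwartzDominated M f) :
    IsSchwartzDominated (fun y => ContinuousLinearMap.compL ℝ V E F (M y)) f where
  continuous_apply T := continuous_clm_apply.2 fun v => hM.continuous_apply (T v)
  opNorm_le y := ContinuousLinearMap.opNorm_le_bound _ (norm_nonneg _) fun T =>
    ((M y).opNorm_comp_le T).trans (by gcongr; exact hM.opNorm_le y)

variable [MeasurableSpace V] [BorelSpace V] [SecondCountableTopology V]
  {μ : Measure V} [μ.HasTemperateGrowth]

theorem integrable_integrand (hM : IsSchwartzDominated M f) (G : 𝓢(V, E)) (x : V) :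
    Integrable (fun y => M y (G (x - y))) μ := by
  refine ((f.integrable (μ := μ)).norm.mul_const (SchwartzMap.seminorm ℝ 0 0 G)).mono'
    (hM.continuous_integrand G.continuous x).aestronglyMeasurable (Eventually.of_forall fun y => ?_)
  exact (M y).le_of_opNorm_le_of_le (hM.opNorm_le y) (SchwartzMap.norm_le_seminorm ℝ G _)

theorem hasFDerivAt_opConv [FiniteDimensional ℝ V] [CompleteSpace F]
    (hM : IsSchwartzDominated M f) (G : 𝓢(V, E)) (x₀ : V) :
    HasFDerivAt (opConv μ M G) (opConv μ (fun y => ContinuousLinearMap.compL ℝ V E F (M y))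
      (SchwartzMap.fderivCLM ℝ V E G) x₀) x₀ := by
  set G' := SchwartzMap.fderivCLM ℝ V E G
  refine hasFDerivAt_integral_of_dominated_of_fderiv_le (F' := fun x y =>
      ContinuousLinearMap.compL ℝ V E F (M y) (G' (x - y))) univ_mem
    (Eventually.of_forall fun x => (hM.continuous_integrand G.continuous x).aestronglyMeasurable)
    (hM.integrable_integrand G x₀)
    (hM.compL.continuous_integrand G'.continuous x₀).aestronglyMeasurable
    (Eventually.of_forall fun y x _ => ?_)
    ((f.integrable (μ := μ)).norm.mul_const (SchwartzMap.seminorm ℝ 0 0 G'))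
    (Eventually.of_forall fun y x _ => ?_)
  · exact ContinuousLinearMap.le_of_opNorm_le_of_le _ (hM.compL.opNorm_le y)
      (SchwartzMap.norm_le_seminorm ℝ G' _)
  · have hG : HasFDerivAt G (G' (x - y)) (x - y) := by
      rw [SchwartzMap.fderivCLM_apply]
      exact G.differentiableAt.hasFDerivAt
    exact (M y).hasFDerivAt.comp x (hG.comp x ((hasFDerivAt_id x).sub_const y))

theorem fderiv_opConv [FiniteDimensional ℝ V] [CompleteSpace F]
    (hM : IsSchwartzDominated M f) (G : 𝓢(V, E)) :
    fderiv ℝ (opConv μ M G) = opConv μ (fun y => ContinuousLinearMap.compL ℝ V E F (M y))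
      (SchwartzMap.fderivCLM ℝ V E G) :=
  funext fun x => (hM.hasFDerivAt_opConv G x).fderiv

end IsSchwartzDominated

end OperatorConvolution

universe u v

namespace IsSchwartzDominated

/- `E` and `F` live in a universe containing that of `V`, so that the induction on the order of
differentiation can replace them by `V →L[ℝ] E` and `V →L[ℝ] F`. -/
variable {V : Type v} {E F : Type (max u v)} {W : Type*} [NormedAddCommGroup V]
  [NormedSpace ℝ V] [FiniteDimensional ℝ V] [MeasurableSpace V] [BorelSpace V] {μ : Measure V}
  [μ.HasTemperateGrowth] [NormedAddCommGroup E] [NormedSpace ℝ E] [NormedAddCommGroup F]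
  [NormedSpace ℝ F] [CompleteSpace F] [NormedAddCommGroup W] [NormedSpace ℝ W]
  {M : V → E →L[ℝ] F} {f : 𝓢(V, W)}

theorem contDiff_opConv (hM : IsSchwartzDominated M f) (G : 𝓢(V, E)) (n : ℕ) :
    ContDiff ℝ n (opConv μ M G) := by
  induction n generalizing E F with
  | zero =>
    have hd : Differentiable ℝ (opConv μ M G) := fun x =>
      (hM.hasFDerivAt_opConv G x).differentiableAt
    exact contDiff_zero.2 hd.continuous
  | succ n ih =>
    push_cast
    refine contDiff_succ_iff_fderiv.2 ⟨fun x => (hM.hasFDerivAt_opConv G x).differentiableAt,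
      by simp, ?_⟩
    rw [hM.fderiv_opConv G]
    exact ih hM.compL _

theorem norm_iteratedFDeriv_opConv_le (hM : IsSchwartzDominated M f) (G : 𝓢(V, E)) (n : ℕ)
    (x : V) :
    ‖iteratedFDeriv ℝ n (opConv μ M G) x‖ ≤ ∫ y, ‖f y‖ * ‖iteratedFDeriv ℝ n G (x - y)‖ ∂μ := by
  induction n generalizing E F x with
  | zero =>
    rw [norm_iteratedFDeriv_zero]
    refine norm_integral_le_of_norm_le (f.integrable_norm_mul_norm_iteratedFDeriv_sub G 0 x)
      (Eventually.of_forall fun y => ?_)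
    rw [norm_iteratedFDeriv_zero]
    exact (M y).le_of_opNorm_le (hM.opNorm_le y) _
  | succ n ih =>
    rw [← norm_iteratedFDeriv_fderiv, hM.fderiv_opConv G]
    refine (ih hM.compL _ x).trans_eq ?_
    have hcoe : ⇑(SchwartzMap.fderivCLM ℝ V E G) = fderiv ℝ G :=
      funext (SchwartzMap.fderivCLM_apply ℝ G)
    simp only [hcoe, norm_iteratedFDeriv_fderiv]

theorem pow_mul_norm_iteratedFDeriv_opConv_le (hM : IsSchwartzDominated M f) (G : 𝓢(V, E))
    (k n : ℕ) (x : V) :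
    ‖x‖ ^ k * ‖iteratedFDeriv ℝ n (opConv μ M G) x‖ ≤
      2 ^ (k - 1) * ((∫ y, ‖y‖ ^ k * ‖f y‖ ∂μ) * SchwartzMap.seminorm ℝ 0 n G +
        (∫ y, ‖f y‖ ∂μ) * SchwartzMap.seminorm ℝ k n G) := by
  set C₀ := SchwartzMap.seminorm ℝ 0 n G
  set Cₖ := SchwartzMap.seminorm ℝ k n G
  have hpoint : ∀ y, ‖x‖ ^ k * (‖f y‖ * ‖iteratedFDeriv ℝ n G (x - y)‖) ≤
      2 ^ (k - 1) * (‖y‖ ^ k * ‖f y‖ * C₀ + ‖f y‖ * Cₖ) := fun y => by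
    have hx : ‖x‖ ^ k ≤ 2 ^ (k - 1) * (‖y‖ ^ k + ‖x - y‖ ^ k) :=
      (pow_le_pow_left₀ (norm_nonneg x) (norm_le_insert' x y) k).trans
        (add_pow_le (norm_nonneg y) (norm_nonneg _) k)
    have hD₀ : ‖iteratedFDeriv ℝ n G (x - y)‖ ≤ C₀ :=
      SchwartzMap.norm_iteratedFDeriv_le_seminorm ℝ G n _
    have hDₖ : ‖x - y‖ ^ k * ‖iteratedFDeriv ℝ n G (x - y)‖ ≤ Cₖ :=
      SchwartzMap.le_seminorm ℝ k n G _
    calc ‖x‖ ^ k * (‖f y‖ * ‖iteratedFDeriv ℝ n G (x - y)‖)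
        ≤ 2 ^ (k - 1) * (‖y‖ ^ k + ‖x - y‖ ^ k) * (‖f y‖ * ‖iteratedFDeriv ℝ n G (x - y)‖) := by
          gcongr
      _ = 2 ^ (k - 1) * (‖y‖ ^ k * ‖f y‖ * ‖iteratedFDeriv ℝ n G (x - y)‖ +
            ‖f y‖ * (‖x - y‖ ^ k * ‖iteratedFDeriv ℝ n G (x - y)‖)) := by ring
      _ ≤ 2 ^ (k - 1) * (‖y‖ ^ k * ‖f y‖ * C₀ + ‖f y‖ * Cₖ) := by gcongr
  have hfk : Integrable (fun y => ‖y‖ ^ k * ‖f y‖) μ := f.integrable_pow_mul μ k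
  have hf : Integrable (fun y => ‖f y‖) μ := f.integrable.norm
  calc ‖x‖ ^ k * ‖iteratedFDeriv ℝ n (opConv μ M G) x‖
      ≤ ‖x‖ ^ k * ∫ y, ‖f y‖ * ‖iteratedFDeriv ℝ n G (x - y)‖ ∂μ := by
        gcongr; exact hM.norm_iteratedFDeriv_opConv_le G n x
    _ = ∫ y, ‖x‖ ^ k * (‖f y‖ * ‖iteratedFDeriv ℝ n G (x - y)‖) ∂μ :=
        (integral_const_mul _ _).symm
    _ ≤ ∫ y, 2 ^ (k - 1) * (‖y‖ ^ k * ‖f y‖ * C₀ + ‖f y‖ * Cₖ) ∂μ :=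
        integral_mono ((f.integrable_norm_mul_norm_iteratedFDeriv_sub G n x).const_mul _)
          (((hfk.mul_const _).add (hf.mul_const _)).const_mul _) hpoint
    _ = _ := by
        rw [integral_const_mul, integral_add (hfk.mul_const _) (hf.mul_const _),
          integral_mul_const, integral_mul_const]

theorem exists_schwartzMap_eq_opConv (hM : IsSchwartzDominated M f) (G : 𝓢(V, E)) :
    ∃ H : 𝓢(V, F), ⇑H = opConv μ M G :=
  ⟨⟨opConv μ M G, contDiff_infty.2 fun n => hM.contDiff_opConv G n,
    fun k n => ⟨_, hM.pow_mul_norm_iteratedFDeriv_opConv_le G k n⟩⟩, rfl⟩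

end IsSchwartzDominated

section TwistedConvolution

variable {V A : Type*} [NormedRing A] [NormedAlgebra ℂ A]

noncomputable def actionCLM (α : V → A →ₐ[ℂ] A)
    (hiso : ∀ (x : V) (a : A), ‖α x a‖ = ‖a‖) (y : V) : A →L[ℝ] A :=
  ((α y).toLinearMap.restrictScalars ℝ).mkContinuous 1 fun a => by simp [hiso]

noncomputable def twistedMul (α : V → A →ₐ[ℂ] A)
    (hiso : ∀ (x : V) (a : A), ‖α x a‖ = ‖a‖) (f : V → A) (y : V) : A →L[ℝ] A :=
  (ContinuousLinearMap.mul ℝ A (f y)).comp (actionCLM α hiso y)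

@[simp]
theorem twistedMul_apply (α : V → A →ₐ[ℂ] A)
    (hiso : ∀ (x : V) (a : A), ‖α x a‖ = ‖a‖) (f : V → A) (y : V) (a : A) :
    twistedMul α hiso f y a = f y * α y a :=
  rfl

theorem continuous_action_apply [TopologicalSpace V] {X : Type*} [TopologicalSpace X]
    {α : V → A →ₐ[ℂ] A} (hiso : ∀ (x : V) (a : A), ‖α x a‖ = ‖a‖)
    (hcont : ∀ a : A, Continuous fun x : V => α x a) {u : X → V} {w : X → A}
    (hu : Continuous u) (hw : Continuous w) : Continuous fun p => α (u p) (w p) :=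
  Continuous.clm_apply_of_norm_le (M := fun p => actionCLM α hiso (u p))
    (fun a => (hcont a).comp hu) continuous_const
    (fun _ => LinearMap.mkContinuous_norm_le _ zero_le_one _) hw

theorem isSchwartzDominated_twistedMul [NormedAddCommGroup V] [NormedSpace ℝ V]
    {α : V → A →ₐ[ℂ] A} (hiso : ∀ (x : V) (a : A), ‖α x a‖ = ‖a‖)
    (hcont : ∀ a : A, Continuous fun x : V => α x a) (f : 𝓢(V, A)) :
    IsSchwartzDominated (twistedMul α hiso f) f where
  continuous_apply a := f.continuous.mul (hcont a)
  opNorm_le y := ContinuousLinearMap.opNorm_le_bound _ (norm_nonneg _) fun a => by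
    rw [twistedMul_apply, ← hiso y a]
    exact norm_mul_le _ _

end TwistedConvolution

section TwistedConvolutionEuclidean

variable {d : ℕ} {A : Type*} [NormedRing A] [NormedAlgebra ℂ A] {α : Vd d → A →ₐ[ℂ] A}

theorem twConv_eq_opConv [CompleteSpace A] (hiso : ∀ (x : Vd d) (a : A), ‖α x a‖ = ‖a‖)
    (f g : Vd d → A) : twConv α f g = opConv volume (twistedMul α hiso f) g :=
  rfl

theorem integrable_twConv_integrand (hiso : ∀ (x : Vd d) (a : A), ‖α x a‖ = ‖a‖)
    (hcont : ∀ a : A, Continuous fun x : Vd d => α x a) (f g : 𝓢(Vd d, A)) (x : Vd d) :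
    Integrable (fun y => f y * α y (g (x - y))) :=
  (isSchwartzDominated_twistedMul hiso hcont f).integrable_integrand g x

variable [CompleteSpace A]

theorem exists_schwartzMap_eq_twConv (hiso : ∀ (x : Vd d) (a : A), ‖α x a‖ = ‖a‖)
    (hcont : ∀ a : A, Continuous fun x : Vd d => α x a) (f g : 𝓢(Vd d, A)) :
    ∃ h : 𝓢(Vd d, A), ⇑h = twConv α f g := by
  rw [twConv_eq_opConv hiso]
  exact (isSchwartzDominated_twistedMul hiso hcont f).exists_schwartzMap_eq_opConv g

theorem twConv_add_left (hiso : ∀ (x : Vd d) (a : A), ‖α x a‖ = ‖a‖)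
    (hcont : ∀ a : A, Continuous fun x : Vd d => α x a) (f g k : 𝓢(Vd d, A)) (x : Vd d) :
    twConv α (fun y => f y + g y) k x = twConv α f k x + twConv α g k x := by
  simp only [twConv, add_mul]
  exact integral_add (integrable_twConv_integrand hiso hcont f k x)
    (integrable_twConv_integrand hiso hcont g k x)

theorem twConv_add_right (hiso : ∀ (x : Vd d) (a : A), ‖α x a‖ = ‖a‖)
    (hcont : ∀ a : A, Continuous fun x : Vd d => α x a) (f g k : 𝓢(Vd d, A)) (x : Vd d) :
    twConv α f (fun y => g y + k y) x = twConv α f g x + twConv α f k x := by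
  simp only [twConv, map_add, mul_add]
  exact integral_add (integrable_twConv_integrand hiso hcont f g x)
    (integrable_twConv_integrand hiso hcont f k x)

theorem twConv_smul_left (c : ℂ) (f g : Vd d → A) (x : Vd d) :
    twConv α (fun y => c • f y) g x = c • twConv α f g x := by
  simp only [twConv, smul_mul_assoc]
  exact integral_smul c _

theorem twConv_smul_right (c : ℂ) (f g : Vd d → A) (x : Vd d) :
    twConv α f (fun y => c • g y) x = c • twConv α f g x := by
  simp only [twConv, map_smul, mul_smul_comm]
  exact integral_smul c _

theorem twConv_assoc (hαadd : ∀ x y : Vd d, α (x + y) = (α x).comp (α y))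
    (hiso : ∀ (x : Vd d) (a : A), ‖α x a‖ = ‖a‖)
    (hcont : ∀ a : A, Continuous fun x : Vd d => α x a) (f g k : 𝓢(Vd d, A)) (x : Vd d) :
    twConv α (twConv α f g) k x = twConv α f (twConv α g k) x := by
  set H : Vd d → Vd d → A := fun y z => f y * α y (g (z - y)) * α z (k (x - z))
  have hH : Integrable (Function.uncurry fun z y => H y z) (volume.prod volume) := by
    have hcontH : Continuous (Function.uncurry fun z y => H y z) :=
      (f.continuous.comp continuous_snd).mul (continuous_action_apply hiso hcont continuous_snd
        (g.continuous.comp (continuous_fst.sub continuous_snd))) |>.mul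
        (continuous_action_apply hiso hcont continuous_fst
          (k.continuous.comp (continuous_const.sub continuous_fst)))
    refine ((Integrable.convolution_integrand (𝕜 := ℝ) (ContinuousLinearMap.mul ℝ ℝ)
      f.integrable.norm g.integrable.norm).mul_const (SchwartzMap.seminorm ℝ 0 0 k)).mono'
      hcontH.aestronglyMeasurable (Eventually.of_forall fun p => ?_)
    calc ‖f p.2 * α p.2 (g (p.1 - p.2)) * α p.1 (k (x - p.1))‖
        ≤ ‖f p.2‖ * ‖α p.2 (g (p.1 - p.2))‖ * ‖α p.1 (k (x - p.1))‖ := norm_mul₃_le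
      _ ≤ ‖f p.2‖ * ‖g (p.1 - p.2)‖ * SchwartzMap.seminorm ℝ 0 0 k := by
        rw [hiso, hiso]; gcongr; exact SchwartzMap.norm_le_seminorm ℝ k _
  have hleft : twConv α (twConv α f g) k x = ∫ z, ∫ y, H y z :=
    integral_congr_ae <| Eventually.of_forall fun z =>
      (integral_mul_const_of_integrable (integrable_twConv_integrand hiso hcont f g z)).symm
  -- substituting `z = y + t` in the inner integral, `α (y + t) = α y ∘ α t` turns it into `H y`
  have hright : twConv α f (twConv α g k) x = ∫ y, ∫ z, H y z := by
    refine integral_congr_ae <| Eventually.of_forall fun y => ?_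
    dsimp only
    rw [← integral_add_left_eq_self (H y) y]
    refine ((twistedMul α hiso f y).integral_comp_comm
      (integrable_twConv_integrand hiso hcont g k (x - y))).symm.trans ?_
    congr 1 with t
    simp only [H, twistedMul_apply, hαadd, AlgHom.coe_comp, Function.comp_apply,
      add_sub_cancel_left, sub_sub, map_mul, mul_assoc]
  rw [hleft, hright, integral_integral_swap hH]

end TwistedConvolutionEuclidean

theorem stmt8_general (d : ℕ) {A : Type*} [NormedRing A] [NormedAlgebra ℂ A] [CompleteSpace A]
    (α : Vd d → (A →ₐ[ℂ] A))
    (hαadd : ∀ x y : Vd d, α (x + y) = (α x).comp (α y))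
    (hiso : ∀ (x : Vd d) (a : A), ‖α x a‖ = ‖a‖)
    (hcont : ∀ a : A, Continuous fun x : Vd d => α x a) :
    -- f * g is again Schwartz
    (∀ f g : SchwartzMap (Vd d) A,
      ∃ h : SchwartzMap (Vd d) A, ∀ x, h x = twConv α (⇑f) (⇑g) x) ∧
    -- associativity
    (∀ f g k : SchwartzMap (Vd d) A, ∀ x,
      twConv α (twConv α (⇑f) (⇑g)) (⇑k) x = twConv α (⇑f) (twConv α (⇑g) (⇑k)) x) ∧
    -- bilinearity
    (∀ f g k : SchwartzMap (Vd d) A, ∀ x,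
      twConv α (fun y => f y + g y) (⇑k) x = twConv α (⇑f) (⇑k) x + twConv α (⇑g) (⇑k) x) ∧
    (∀ f g k : SchwartzMap (Vd d) A, ∀ x,
      twConv α (⇑f) (fun y => g y + k y) x = twConv α (⇑f) (⇑g) x + twConv α (⇑f) (⇑k) x) ∧
    (∀ (c : ℂ) (f g : SchwartzMap (Vd d) A), ∀ x,
      twConv α (fun y => c • f y) (⇑g) x = c • twConv α (⇑f) (⇑g) x ∧
      twConv α (⇑f) (fun y => c • g y) x = c • twConv α (⇑f) (⇑g) x) := by
  refine ⟨fun f g => ?_, twConv_assoc hαadd hiso hcont, twConv_add_left hiso hcont,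
    twConv_add_right hiso hcont,
    fun c f g x => ⟨twConv_smul_left c f g x, twConv_smul_right c f g x⟩⟩
  obtain ⟨h, hh⟩ := exists_schwartzMap_eq_twConv hiso hcont f g
  exact ⟨h, congrFun hh⟩

theorem stmt8 (d : ℕ) {A : Type*} [NormedRing A] [NormedAlgebra ℂ A] [CompleteSpace A]
    (α : Vd d → (A →ₐ[ℂ] A))
    (hα0 : α 0 = AlgHom.id ℂ A)
    (hαadd : ∀ x y : Vd d, α (x + y) = (α x).comp (α y))
    (hiso : ∀ (x : Vd d) (a : A), ‖α x a‖ = ‖a‖)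
    (hcont : ∀ a : A, Continuous fun x : Vd d => α x a) :
    -- f * g is again Schwartz
    (∀ f g : SchwartzMap (Vd d) A,
      ∃ h : SchwartzMap (Vd d) A, ∀ x, h x = twConv α (⇑f) (⇑g) x) ∧
    -- associativity
    (∀ f g k : SchwartzMap (Vd d) A, ∀ x,
      twConv α (twConv α (⇑f) (⇑g)) (⇑k) x = twConv α (⇑f) (twConv α (⇑g) (⇑k)) x) ∧
    -- bilinearity
    (∀ f g k : SchwartzMap (Vd d) A, ∀ x,
      twConv α (fun y => f y + g y) (⇑k) x = twConv α (⇑f) (⇑k) x + twConv α (⇑g) (⇑k) x) ∧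
    (∀ f g k : SchwartzMap (Vd d) A, ∀ x,
      twConv α (⇑f) (fun y => g y + k y) x = twConv α (⇑f) (⇑g) x + twConv α (⇑f) (⇑k) x) ∧
    (∀ (c : ℂ) (f g : SchwartzMap (Vd d) A), ∀ x,
      twConv α (fun y => c • f y) (⇑g) x = c • twConv α (⇑f) (⇑g) x ∧
      twConv α (⇑f) (fun y => c • g y) x = c • twConv α (⇑f) (⇑g) x) :=
  stmt8_general d α hαadd hiso hcont
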